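/- (Approximate descent property.) Suppose there is L ≥ 0 such that ‖∇f(u) − ∇f(v)‖ ≤ L‖u − v‖ for all u, v in the closed convex hull of {x^k : k ∈ ℕ}, and set ξ := 1/(2 + 2λ²L²). Then there exists T̄ > 0, depending only on L and λ, with the following property: for every T ∈ (0, T̄], every K₀ ∈ ℕ, and every strictly increasing sequence {m_k} ⊂ ℕ satisfying (4/5)·T ≤ τ_{m_k, m_{k+1}} ≤ T for all k ≥ K₀, one has H_ξ(z^{m_{k+1}}) − H_ξ(z^{m_k}) ≤ −(ξT/5)·‖F_nor(z^{m_k})‖² + (5/T)·s_{m_k, m_{k+1}}² for all k ≥ K₀. -/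

import Mathlib

open MeasureTheory Filter Real Set Topology
open scoped ENNReal NNReal

variable {d : ℕ}

local notation "E" => EuclideanSpace ℝ (Fin d)
local notation "⟪" x ", " y "⟫" => @inner ℝ _ _ x y

/-- The normal map `F_nor(z) = ∇f(prox z) + (z - prox z)/λ`. -/
noncomputable def Fnor (f' prox : E → E) (lam : ℝ) (z : E) : E :=
  f' (prox z) + lam⁻¹ • (z - prox z)

/-- The natural residual `F_nat(x) = x - prox(x - λ ∇f x)`. -/
noncomputable def Fnat (f' prox : E → E) (lam : ℝ) (x : E) : E :=
  x - prox (x - lam • f' x)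

/-- The convex subdifferential of an `EReal`-valued function. -/
def subdiff (φ : E → EReal) (x : E) : Set E :=
  {v : E | ∀ y : E, φ x + ((⟪v, y - x⟫ : ℝ) : EReal) ≤ φ y}

/-- The real value of `ψ = f + φ` (finite on the effective domain of `φ`). -/
noncomputable def psiR (f : E → ℝ) (φ : E → EReal) (x : E) : ℝ :=
  f x + (φ x).toReal

/-- The merit function `H_ξ(z) = ψ(prox z) + (ξ λ / 2) ‖F_nor z‖²`. -/
noncomputable def Hmer (f : E → ℝ) (φ : E → EReal) (f' prox : E → E) (lam ξ : ℝ) (z : E) : ℝ :=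
  psiR f φ (prox z) + ξ * lam / 2 * ‖Fnor f' prox lam z‖ ^ 2

/-- The KL inequality at `xbar` with desingularizing function `s ↦ c s^(1-θ)`. -/
def KLAt (f : E → ℝ) (f' : E → E) (φ : E → EReal) (c θ : ℝ) (xbar : E) : Prop :=
  ∃ η > (0 : ℝ), ∃ U ∈ nhds xbar, ∀ v ∈ U,
    0 < |psiR f φ v - psiR f φ xbar| → |psiR f φ v - psiR f φ xbar| < η →
      ∀ w ∈ subdiff φ v,
        1 ≤ c * (1 - θ) * |psiR f φ v - psiR f φ xbar| ^ (-θ) * ‖f' v + w‖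

/-!
Over a window of total step size `τ ∈ [4T/5, T]` the iterates move like a single normal-map step,
`z_N - z_M = -τ F_nor(z_M) + r`. Along the trajectory `F_nor` is `(L + 2/λ)`-Lipschitz (the prox
is nonexpansive), so a discrete Gronwall argument gives `‖z_j - z_M‖ ≤ 2 (T ‖F_nor(z_M)‖ + s)` on
the window, and hence `‖r‖ ≤ 2 (L + 2/λ) T (T ‖F_nor(z_M)‖ + s) + s`.

For such a step, the descent lemma for `f`, the subgradient inequality
`(z - prox z)/λ ∈ ∂φ(prox z)` and the firm nonexpansiveness of the prox bound the change of `H_ξ`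
by inner products with `F_nor(z_M)`. Young's inequality then eliminates the displacement
`‖prox z_N - prox z_M‖`; the choice `ξ = 1/(2 + 2λ²L²)`, i.e. `2ξ(λL)² = 1 - 2ξ`, is exactly what
lets the cross term `ξλL ‖F_nor(z_M)‖ ‖prox z_N - prox z_M‖` be absorbed. What is left is of lower
order in `T` and is absorbed once `(L + 2/λ) T (1 + λ(L + 2/λ)) ≤ ξ/30`, which defines `T̄`.
-/

lemma le_of_forall_le_add_mul {a b c : ℝ} (h : ∀ t : ℝ, 0 < t → t ≤ 1 → a ≤ b + t * c) :
    a ≤ b := by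
  have hlim : Tendsto (fun t : ℝ => b + t * c) (𝓝[>] 0) (𝓝 b) := by
    have : Tendsto (fun t : ℝ => b + t * c) (𝓝 0) (𝓝 (b + 0 * c)) :=
      tendsto_const_nhds.add (tendsto_id.mul_const c)
    simpa using this.mono_left nhdsWithin_le_nhds
  refine ge_of_tendsto hlim ?_
  filter_upwards [Ioc_mem_nhdsGT (zero_lt_one' ℝ)] with t ht using h t ht.1 ht.2

structure IsProxMap {H : Type*} [NormedAddCommGroup H] [InnerProductSpace ℝ H]
    (φ : H → EReal) (prox : H → H) (lam : ℝ) : Prop where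
  pos : 0 < lam
  convex : ∀ u v : H, ∀ a b : ℝ, 0 ≤ a → 0 ≤ b → a + b = 1 →
    φ (a • u + b • v) ≤ (a : EReal) * φ u + (b : EReal) * φ v
  ne_bot : ∀ v, φ v ≠ ⊥
  exists_ne_top : ∃ v, φ v ≠ ⊤
  minimizes : ∀ u v : H, φ (prox u) + ((‖u - prox u‖ ^ 2 / (2 * lam) : ℝ) : EReal)
    ≤ φ v + ((‖u - v‖ ^ 2 / (2 * lam) : ℝ) : EReal)

namespace IsProxMap

variable {H : Type*} [NormedAddCommGroup H] [InnerProductSpace ℝ H]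
  {φ : H → EReal} {prox : H → H} {lam : ℝ}

lemma ne_top (hP : IsProxMap φ prox lam) (u : H) : φ (prox u) ≠ ⊤ := by
  obtain ⟨v, hv⟩ := hP.exists_ne_top
  intro htop
  have h := hP.minimizes u v
  rw [htop, EReal.top_add_of_ne_bot (EReal.coe_ne_bot _), top_le_iff] at h
  exact EReal.add_ne_top hv (EReal.coe_ne_top _) h

lemma toReal_add_le (hP : IsProxMap φ prox lam) (u : H) {v : H} (hv : φ v ≠ ⊤) :
    (φ (prox u)).toReal + ‖u - prox u‖ ^ 2 / (2 * lam)
      ≤ (φ v).toReal + ‖u - v‖ ^ 2 / (2 * lam) := by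
  have h := hP.minimizes u v
  rw [← EReal.coe_toReal (hP.ne_top u) (hP.ne_bot _), ← EReal.coe_toReal hv (hP.ne_bot _),
    ← EReal.coe_add, ← EReal.coe_add, EReal.coe_le_coe_iff] at h
  exact h

lemma toReal_segment_le (hP : IsProxMap φ prox lam) {p y : H} (hp : φ p ≠ ⊤) (hy : φ y ≠ ⊤)
    {t : ℝ} (ht₀ : 0 ≤ t) (ht₁ : t ≤ 1) :
    φ (p + t • (y - p)) ≠ ⊤ ∧
      (φ (p + t • (y - p))).toReal ≤ (1 - t) * (φ p).toReal + t * (φ y).toReal := by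
  have hconv : φ (p + t • (y - p))
      ≤ (((1 - t) * (φ p).toReal + t * (φ y).toReal : ℝ) : EReal) := by
    have h := hP.convex p y (1 - t) t (by linarith) ht₀ (by ring)
    rwa [← EReal.coe_toReal hp (hP.ne_bot _), ← EReal.coe_toReal hy (hP.ne_bot _),
      ← EReal.coe_mul, ← EReal.coe_mul, ← EReal.coe_add,
      show (1 - t) • p + t • y = p + t • (y - p) by module] at h
  have hne : φ (p + t • (y - p)) ≠ ⊤ := ne_top_of_le_ne_top (EReal.coe_ne_top _) hconv
  exact ⟨hne, EReal.toReal_le_toReal hconv (hP.ne_bot _) (EReal.coe_ne_top _)⟩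

lemma toReal_sub_le_inner (hP : IsProxMap φ prox lam) (u : H) {y : H} (hy : φ y ≠ ⊤) :
    (φ (prox u)).toReal - (φ y).toReal ≤ ⟪u - prox u, prox u - y⟫ / lam := by
  set p := prox u
  have hlam := hP.pos
  refine le_of_forall_le_add_mul (c := ‖y - p‖ ^ 2 / (2 * lam)) fun t ht₀ ht₁ => ?_
  obtain ⟨hne, hseg⟩ := hP.toReal_segment_le (hP.ne_top u) hy ht₀.le ht₁
  have hmin := hP.toReal_add_le u hne
  have hnorm : ‖u - (p + t • (y - p))‖ ^ 2
      = ‖u - p‖ ^ 2 + 2 * t * ⟪u - p, p - y⟫ + t ^ 2 * ‖y - p‖ ^ 2 := by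
    rw [show u - (p + t • (y - p)) = (u - p) + t • (p - y) by module, norm_add_sq_real,
      inner_smul_right, norm_smul, norm_sub_rev p y, Real.norm_eq_abs, mul_pow, sq_abs]
    ring
  rw [hnorm] at hmin
  have key : t * ((φ p).toReal - (φ y).toReal)
      ≤ t * (⟪u - p, p - y⟫ / lam + t * (‖y - p‖ ^ 2 / (2 * lam))) := by
    have e : t * (⟪u - p, p - y⟫ / lam + t * (‖y - p‖ ^ 2 / (2 * lam)))
        = 2 * t * ⟪u - p, p - y⟫ / (2 * lam) + t ^ 2 * ‖y - p‖ ^ 2 / (2 * lam) := by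
      field_simp
    rw [add_div, add_div] at hmin
    rw [e]
    linarith
  exact le_of_mul_le_mul_left key ht₀

lemma norm_sq_le_inner (hP : IsProxMap φ prox lam) (u v : H) :
    ‖prox u - prox v‖ ^ 2 ≤ ⟪u - v, prox u - prox v⟫ := by
  have h₁ := hP.toReal_sub_le_inner u (hP.ne_top v)
  have h₂ := hP.toReal_sub_le_inner v (hP.ne_top u)
  have hsum : 0 ≤ ⟪u - prox u, prox u - prox v⟫ + ⟪v - prox v, prox v - prox u⟫ := by
    have h := add_le_add h₁ h₂
    rw [← add_div] at h
    have h0 : 0 ≤ (⟪u - prox u, prox u - prox v⟫ + ⟪v - prox v, prox v - prox u⟫) / lam := by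
      linarith
    rwa [le_div_iff₀ hP.pos, zero_mul] at h0
  have e : ⟪u - v, prox u - prox v⟫ - ‖prox u - prox v‖ ^ 2
      = ⟪u - prox u, prox u - prox v⟫ + ⟪v - prox v, prox v - prox u⟫ := by
    rw [← real_inner_self_eq_norm_sq, ← neg_sub (prox u) (prox v), inner_neg_right,
      ← inner_sub_left, ← sub_eq_add_neg, ← inner_sub_left]
    congr 1; abel
  linarith

lemma norm_sub_le (hP : IsProxMap φ prox lam) (u v : H) :
    ‖prox u - prox v‖ ≤ ‖u - v‖ := by
  have h := (hP.norm_sq_le_inner u v).trans (real_inner_le_norm _ _)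
  rw [sq] at h
  rcases (norm_nonneg (prox u - prox v)).eq_or_lt with h0 | h0
  · rw [← h0]; exact norm_nonneg _
  · exact le_of_mul_le_mul_right h h0

end IsProxMap

theorem Convex.add_inner_sub_le_of_lipschitz_gradient {H : Type*} [NormedAddCommGroup H]
    [InnerProductSpace ℝ H] [CompleteSpace H] {f : H → ℝ} {f' : H → H}
    (hf : ∀ v, HasGradientAt f (f' v) v) {K : Set H} (hK : Convex ℝ K) {L : ℝ}
    (hLip : ∀ u ∈ K, ∀ v ∈ K, ‖f' u - f' v‖ ≤ L * ‖u - v‖) {a b : H} (ha : a ∈ K) (hb : b ∈ K) :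
    f a + ⟪f' a, b - a⟫ - L / 2 * ‖b - a‖ ^ 2 ≤ f b := by
  let c : ℝ → H := fun t => a + t • (b - a)
  let g : ℝ → ℝ := fun t => f (c t) - t * ⟪f' a, b - a⟫ + L / 2 * ‖b - a‖ ^ 2 * t ^ 2
  have hg : ∀ t, HasDerivAt g (⟪f' (c t), b - a⟫ - ⟪f' a, b - a⟫ + L * ‖b - a‖ ^ 2 * t) t := by
    intro t
    have hc : HasDerivAt c (b - a) t :=
      (((hasDerivAt_id t).smul_const (b - a)).const_add a).congr_deriv (one_smul _ _)
    have hfc : HasDerivAt (fun t => f (c t)) ⟪f' (c t), b - a⟫ t :=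
      (hf (c t)).hasFDerivAt.comp_hasDerivAt t hc
    exact ((hfc.sub ((hasDerivAt_id t).mul_const _)).add
      ((hasDerivAt_pow 2 t).const_mul (L / 2 * ‖b - a‖ ^ 2))).congr_deriv (by simp; ring)
  have hmono : MonotoneOn g (Icc 0 1) := by
    refine monotoneOn_of_deriv_nonneg (convex_Icc 0 1)
      (fun t _ => (hg t).continuousAt.continuousWithinAt)
      (fun t _ => (hg t).differentiableAt.differentiableWithinAt) fun t ht => ?_
    rw [interior_Icc] at ht
    have hct : c t ∈ K := hK.add_smul_sub_mem ha hb ⟨ht.1.le, ht.2.le⟩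
    have hdist : ‖c t - a‖ = t * ‖b - a‖ := by
      simp [c, norm_smul, abs_of_pos ht.1]
    have hcross : -(L * t * ‖b - a‖ ^ 2) ≤ ⟪f' (c t) - f' a, b - a⟫ := by
      have h := (abs_real_inner_le_norm (f' (c t) - f' a) (b - a)).trans
        (mul_le_mul_of_nonneg_right (hLip _ hct _ ha) (norm_nonneg _))
      rw [hdist] at h
      linarith [neg_abs_le ⟪f' (c t) - f' a, b - a⟫]
    rw [(hg t).deriv, ← inner_sub_left]
    linarith
  have h01 := hmono (left_mem_Icc.mpr zero_le_one) (right_mem_Icc.mpr zero_le_one) zero_le_one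
  have hg0 : g 0 = f a := by simp [g, c]
  have hg1 : g 1 = f b - ⟪f' a, b - a⟫ + L / 2 * ‖b - a‖ ^ 2 := by simp [g, c]
  linarith

lemma young_window_bound {ξ μ L τ a V ρ D : ℝ} (hξ₀ : 0 ≤ ξ) (hξ : ξ ≤ 1 / 2)
    (hμ : 2 * ξ * μ ^ 2 = 1 - 2 * ξ) (hL : 8 * L * τ ≤ 1) :
    (1 - ξ) * (-V ^ 2 + V * ρ)
        + τ * (L / 2 * V ^ 2 + D * V + ξ * μ * (a * V) - ξ * τ * a ^ 2 + ξ * (a * ρ))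
      ≤ -(ξ / 2) * (τ * a) ^ 2 + ρ ^ 2 + 4 * (τ * D) ^ 2 := by
  set c := 1 - ξ
  set P := τ * a
  have hc : 1 / 2 ≤ c := by linarith
  have h₁ : c * (V * ρ) ≤ c * (V ^ 2 / 4 + ρ ^ 2) :=
    mul_le_mul_of_nonneg_left (by nlinarith [sq_nonneg (V / 2 - ρ)]) (by linarith)
  have h₂ : τ * (ξ * μ * (a * V)) ≤ c * V ^ 2 / 2 + ξ * P ^ 2 / 4 := by
    have hμP : (ξ * μ * P) ^ 2 = ξ * (1 - 2 * ξ) / 2 * P ^ 2 := by rw [← hμ]; ring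
    have hsq : 2 * c * (ξ * μ * P * V) ≤ c ^ 2 * V ^ 2 + ξ * (1 - 2 * ξ) / 2 * P ^ 2 := by
      nlinarith [sq_nonneg (c * V - ξ * μ * P)]
    have hξP : ξ * (1 - 2 * ξ) / 2 * P ^ 2 ≤ c * (ξ * P ^ 2 / 2) := by
      nlinarith [mul_nonneg hξ₀ (sq_nonneg P)]
    nlinarith
  have h₃ : τ * (D * V) ≤ c * V ^ 2 / 8 + 4 * (τ * D) ^ 2 := by
    have hsq : 8 * c * (τ * D * V) ≤ c ^ 2 * V ^ 2 + 16 * (τ * D) ^ 2 := by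
      nlinarith [sq_nonneg (c * V - 4 * (τ * D))]
    nlinarith [sq_nonneg (τ * D)]
  have h₄ : τ * (L / 2 * V ^ 2) ≤ c * V ^ 2 / 8 := by
    nlinarith [mul_le_mul_of_nonneg_right hL (sq_nonneg V)]
  have h₅ : τ * (ξ * (a * ρ)) ≤ ξ * P ^ 2 / 4 + ξ * ρ ^ 2 := by
    nlinarith [mul_nonneg hξ₀ (sq_nonneg (P / 2 - ρ))]
  have h₆ : τ * (ξ * τ * a ^ 2) = ξ * P ^ 2 := by ring
  linarith

lemma window_bound_of_young {ξ lam LF T τ a S ρ D Δ : ℝ} (hT : 0 < T) (hτ₁ : 4 / 5 * T ≤ τ)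
    (hτ₂ : τ ≤ T) (hξ₀ : 0 ≤ ξ) (hξ : ξ ≤ 1 / 2) (hlam : 0 ≤ lam) (hLF : 0 ≤ LF)
    (hsmall : LF * T * (1 + lam * LF) ≤ ξ / 30)
    (hρ₀ : 0 ≤ ρ) (hρ : ρ ≤ 2 * LF * T * (T * a + S) + S)
    (hD₀ : 0 ≤ D) (hD : D ≤ 2 * LF * (T * a + S))
    (hΔ : τ * Δ ≤ -(ξ / 2) * (τ * a) ^ 2 + ρ ^ 2 + τ * (4 * τ + ξ * lam / 2) * D ^ 2) :
    Δ ≤ -(ξ * T / 5) * a ^ 2 + 5 / T * S ^ 2 := by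
  have hτ : 0 < τ := by linarith
  have hA : (T * a + S) ^ 2 ≤ 2 * T ^ 2 * a ^ 2 + 2 * S ^ 2 := by
    nlinarith only [sq_nonneg (T * a - S)]
  set A := T * a + S
  set θ := LF * T
  have hθ₀ : 0 ≤ θ := mul_nonneg hLF hT.le
  have hLFθ : 0 ≤ lam * LF * θ := by positivity
  have hθ : θ ≤ 1 / 60 := by nlinarith only [hsmall, hLFθ, hξ]
  have hκ : 24 * θ ^ 2 + lam * LF * θ ≤ ξ / 30 := by
    nlinarith only [hsmall, mul_le_mul_of_nonneg_left hθ hθ₀]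
  have hρ2 : ρ ^ 2 ≤ 8 * θ ^ 2 * A ^ 2 + 2 * S ^ 2 := by
    have hρ' : ρ ≤ 2 * θ * A + S := hρ.trans_eq (by simp only [θ, A]; ring)
    nlinarith only [mul_le_mul hρ' hρ' hρ₀ (hρ₀.trans hρ'), sq_nonneg (2 * θ * A - S)]
  have hD2 : τ * (4 * τ + ξ * lam / 2) * D ^ 2 ≤ (16 * θ ^ 2 + lam * LF * θ) * A ^ 2 := by
    have h1 : D ^ 2 ≤ 4 * LF ^ 2 * A ^ 2 := by
      nlinarith only [mul_le_mul hD hD hD₀ (hD₀.trans hD)]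
    have h2 : τ * (4 * τ + ξ * lam / 2) ≤ T * (4 * T + lam / 4) := by
      nlinarith only [mul_le_mul_of_nonneg_right hξ hlam, mul_le_mul hτ₂ hτ₂ hτ.le hT.le, hτ₂, hT,
        mul_le_mul_of_nonneg_left hτ₂ (mul_nonneg hξ₀ hlam)]
    calc τ * (4 * τ + ξ * lam / 2) * D ^ 2 ≤ T * (4 * T + lam / 4) * (4 * LF ^ 2 * A ^ 2) :=
          mul_le_mul h2 h1 (sq_nonneg _) (by positivity)
      _ = (16 * θ ^ 2 + lam * LF * θ) * A ^ 2 := by simp only [θ]; ring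
  have hτa : 2 / 5 * ξ * T * τ * a ^ 2 ≤ ξ / 2 * (τ * a) ^ 2 := by
    have : 0 ≤ ξ * τ * a ^ 2 := by positivity
    nlinarith only [mul_le_mul_of_nonneg_left hτ₁ this]
  have hTτ : ξ * T ^ 2 * a ^ 2 ≤ 5 / 4 * (ξ * T * τ * a ^ 2) := by
    have : 0 ≤ ξ * T * a ^ 2 := by positivity
    nlinarith only [mul_le_mul_of_nonneg_left hτ₁ this]
  have hκA : (24 * θ ^ 2 + lam * LF * θ) * A ^ 2 ≤ ξ / 30 * (2 * T ^ 2 * a ^ 2 + 2 * S ^ 2) :=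
    mul_le_mul hκ hA (sq_nonneg _) (by positivity)
  have hξS : ξ * S ^ 2 ≤ S ^ 2 / 2 := by
    nlinarith only [mul_le_mul_of_nonneg_right hξ (sq_nonneg S)]
  have hS5 : 4 * S ^ 2 ≤ τ * (5 / T * S ^ 2) := by
    have h : 4 ≤ 5 * τ / T := by rw [le_div_iff₀ hT]; linarith
    calc 4 * S ^ 2 ≤ 5 * τ / T * S ^ 2 := mul_le_mul_of_nonneg_right h (sq_nonneg S)
      _ = τ * (5 / T * S ^ 2) := by ring
  have hgap : τ * Δ ≤ τ * (-(ξ * T / 5) * a ^ 2 + 5 / T * S ^ 2) := by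
    have : 0 ≤ ξ * T * τ * a ^ 2 := by positivity
    linarith only [hΔ, hτa, hρ2, hD2, hκA, hTτ, hξS, hS5, this, sq_nonneg S]
  exact le_of_mul_le_mul_left hgap hτ

section Window

variable {H : Type*} [NormedAddCommGroup H] [NormedSpace ℝ H]

lemma norm_sum_smul_le {ι : Type*} (s : Finset ι) {α : ι → ℝ} {g : ι → H} {B : ℝ}
    (hα : ∀ i ∈ s, 0 ≤ α i) (hg : ∀ i ∈ s, ‖g i‖ ≤ B) :
    ‖∑ i ∈ s, α i • g i‖ ≤ (∑ i ∈ s, α i) * B := by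
  rw [Finset.sum_mul]
  refine norm_sum_le_of_le s fun i hi => ?_
  rw [norm_smul, Real.norm_of_nonneg (hα i hi)]
  exact mul_le_mul_of_nonneg_left (hg i hi) (hα i hi)

variable {α : ℕ → ℝ} {z F e : ℕ → H}

lemma sub_eq_neg_sum_smul_sub_sum_smul (hz : ∀ i, z (i + 1) = z i - α i • (F i + e i))
    {M j : ℕ} (hMj : M ≤ j) :
    z j - z M = -(∑ i ∈ Finset.Ico M j, α i • F i) - ∑ i ∈ Finset.Ico M j, α i • e i := by
  rw [← Finset.sum_Ico_sub z hMj, ← Finset.sum_neg_distrib, ← Finset.sum_sub_distrib]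
  refine Finset.sum_congr rfl fun i _ => ?_
  rw [hz i, smul_add]
  abel

variable {LF T S : ℝ} {M N : ℕ}

lemma norm_sub_le_of_mem_window (hz : ∀ i, z (i + 1) = z i - α i • (F i + e i))
    (hα : ∀ i, 0 ≤ α i) (hτ : ∑ i ∈ Finset.Ico M N, α i ≤ T) (hLF : 0 ≤ LF)
    (hLFT : 2 * LF * T ≤ 1) (hF : ∀ i ∈ Finset.Ico M N, ‖F i - F M‖ ≤ LF * ‖z i - z M‖)
    (hE : ∀ j ∈ Finset.Icc M N, ‖∑ i ∈ Finset.Ico M j, α i • e i‖ ≤ S) :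
    ∀ j ∈ Finset.Icc M N, ‖z j - z M‖ ≤ 2 * (T * ‖F M‖ + S) := by
  intro j hj
  induction j using Nat.strong_induction_on with
  | _ j ih =>
  obtain ⟨hMj, hjN⟩ := Finset.mem_Icc.mp hj
  have hS : 0 ≤ S := (norm_nonneg _).trans (hE M (Finset.left_mem_Icc.mpr (hMj.trans hjN)))
  have hT : 0 ≤ T := (Finset.sum_nonneg fun i _ => hα i).trans hτ
  set A := T * ‖F M‖ + S
  have hA : 0 ≤ A := by positivity
  have hτj : ∑ i ∈ Finset.Ico M j, α i ≤ T :=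
    (Finset.sum_le_sum_of_subset_of_nonneg (Finset.Ico_subset_Ico_right hjN)
      fun i _ _ => hα i).trans hτ
  have hFi : ∀ i ∈ Finset.Ico M j, ‖F i‖ ≤ ‖F M‖ + LF * (2 * A) := by
    intro i hi
    obtain ⟨hMi, hij⟩ := Finset.mem_Ico.mp hi
    have hzi := ih i hij (Finset.mem_Icc.mpr ⟨hMi, (hij.trans_le hjN).le⟩)
    have hFi := hF i (Finset.mem_Ico.mpr ⟨hMi, hij.trans_le hjN⟩)
    calc ‖F i‖ ≤ ‖F M‖ + ‖F i - F M‖ := norm_le_insert' _ _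
      _ ≤ ‖F M‖ + LF * (2 * A) :=
        add_le_add_right (hFi.trans (mul_le_mul_of_nonneg_left hzi hLF)) _
  calc ‖z j - z M‖
      ≤ ‖∑ i ∈ Finset.Ico M j, α i • F i‖ + ‖∑ i ∈ Finset.Ico M j, α i • e i‖ := by
        rw [sub_eq_neg_sum_smul_sub_sum_smul hz hMj, ← norm_neg (∑ i ∈ _, α i • F i)]
        exact norm_sub_le _ _
    _ ≤ T * (‖F M‖ + LF * (2 * A)) + S :=
        add_le_add ((norm_sum_smul_le _ (fun i _ => hα i) hFi).trans
          (mul_le_mul_of_nonneg_right hτj (by positivity))) (hE j hj)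
    _ ≤ 2 * A := by linarith [mul_le_mul_of_nonneg_right hLFT hA]

lemma norm_sub_add_sum_smul_le (hz : ∀ i, z (i + 1) = z i - α i • (F i + e i))
    (hα : ∀ i, 0 ≤ α i) (hMN : M ≤ N) (hτ : ∑ i ∈ Finset.Ico M N, α i ≤ T) (hLF : 0 ≤ LF)
    (hLFT : 2 * LF * T ≤ 1) (hF : ∀ i ∈ Finset.Ico M N, ‖F i - F M‖ ≤ LF * ‖z i - z M‖)
    (hE : ∀ j ∈ Finset.Icc M N, ‖∑ i ∈ Finset.Ico M j, α i • e i‖ ≤ S) :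
    ‖z N - z M + (∑ i ∈ Finset.Ico M N, α i) • F M‖ ≤ 2 * LF * T * (T * ‖F M‖ + S) + S := by
  have hS : 0 ≤ S := (norm_nonneg _).trans (hE M (Finset.left_mem_Icc.mpr hMN))
  have hT : 0 ≤ T := (Finset.sum_nonneg fun i _ => hα i).trans hτ
  have hsplit : z N - z M + (∑ i ∈ Finset.Ico M N, α i) • F M
      = -(∑ i ∈ Finset.Ico M N, α i • (F i - F M)) - ∑ i ∈ Finset.Ico M N, α i • e i := by
    simp only [sub_eq_neg_sum_smul_sub_sum_smul hz hMN, Finset.sum_smul, smul_sub,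
      Finset.sum_sub_distrib]
    abel
  have hR : ‖∑ i ∈ Finset.Ico M N, α i • (F i - F M)‖ ≤ T * (LF * (2 * (T * ‖F M‖ + S))) :=
    (norm_sum_smul_le _ (fun i _ => hα i) fun i hi => (hF i hi).trans
      (mul_le_mul_of_nonneg_left (norm_sub_le_of_mem_window hz hα hτ hLF hLFT hF hE i
        (Finset.Ico_subset_Icc_self hi)) hLF)).trans
      (mul_le_mul_of_nonneg_right hτ (by positivity))
  rw [hsplit]
  calc _ ≤ ‖-(∑ i ∈ Finset.Ico M N, α i • (F i - F M))‖ + ‖∑ i ∈ Finset.Ico M N, α i • e i‖ :=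
        norm_sub_le _ _
    _ ≤ _ := by
      rw [norm_neg]
      linarith [hE N (Finset.right_mem_Icc.mpr hMN)]

end Window

lemma norm_Fnor_sub_le {f' : E → E} {φ : E → EReal} {prox : E → E} {lam L : ℝ} {K : Set E}
    (hP : IsProxMap φ prox lam) (hL : 0 ≤ L)
    (hLip : ∀ u ∈ K, ∀ v ∈ K, ‖f' u - f' v‖ ≤ L * ‖u - v‖) {z z' : E}
    (hx : prox z ∈ K) (hx' : prox z' ∈ K) :
    ‖Fnor f' prox lam z' - Fnor f' prox lam z‖ ≤ (L + 2 / lam) * ‖z' - z‖ := by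
  have hlam := hP.pos
  have hprox := hP.norm_sub_le z' z
  have hsplit : Fnor f' prox lam z' - Fnor f' prox lam z
      = (f' (prox z') - f' (prox z)) + lam⁻¹ • ((z' - z) - (prox z' - prox z)) := by
    simp only [Fnor]; module
  calc ‖Fnor f' prox lam z' - Fnor f' prox lam z‖
      ≤ ‖f' (prox z') - f' (prox z)‖ + lam⁻¹ * (‖z' - z‖ + ‖prox z' - prox z‖) := by
        rw [hsplit]
        refine (norm_add_le _ _).trans (add_le_add_right ?_ _)
        rw [norm_smul, Real.norm_of_nonneg (inv_nonneg.mpr hlam.le)]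
        exact mul_le_mul_of_nonneg_left (norm_sub_le _ _) (inv_nonneg.mpr hlam.le)
    _ ≤ L * ‖z' - z‖ + lam⁻¹ * (‖z' - z‖ + ‖z' - z‖) := by
        gcongr
        exact (hLip _ hx' _ hx).trans (mul_le_mul_of_nonneg_left hprox hL)
    _ = (L + 2 / lam) * ‖z' - z‖ := by ring

lemma psiR_prox_sub_le {f : E → ℝ} {f' : E → E} {φ : E → EReal} {prox : E → E} {lam L : ℝ}
    {K : Set E} (hP : IsProxMap φ prox lam) (hf : ∀ v, HasGradientAt f (f' v) v)
    (hK : Convex ℝ K) (hLip : ∀ u ∈ K, ∀ v ∈ K, ‖f' u - f' v‖ ≤ L * ‖u - v‖) {z z' : E}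
    (hx : prox z ∈ K) (hx' : prox z' ∈ K) :
    psiR f φ (prox z') - psiR f φ (prox z)
      ≤ ⟪Fnor f' prox lam z', prox z' - prox z⟫ + L / 2 * ‖prox z' - prox z‖ ^ 2 := by
  have hf' := hK.add_inner_sub_le_of_lipschitz_gradient hf hLip hx' hx
  have hφ := hP.toReal_sub_le_inner z' (hP.ne_top z)
  rw [← neg_sub (prox z') (prox z), inner_neg_right, norm_neg] at hf'
  have hF : ⟪Fnor f' prox lam z', prox z' - prox z⟫
      = ⟪f' (prox z'), prox z' - prox z⟫ + ⟪z' - prox z', prox z' - prox z⟫ / lam := by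
    rw [Fnor, inner_add_left, real_inner_smul_left, inv_mul_eq_div]
  rw [psiR, psiR, hF]
  linarith

lemma Hmer_sub_le {f : E → ℝ} {f' : E → E} {φ : E → EReal} {prox : E → E} {lam L : ℝ}
    {K : Set E} (hP : IsProxMap φ prox lam) (hf : ∀ v, HasGradientAt f (f' v) v)
    (hK : Convex ℝ K) (hLip : ∀ u ∈ K, ∀ v ∈ K, ‖f' u - f' v‖ ≤ L * ‖u - v‖) {z z' : E}
    (hx : prox z ∈ K) (hx' : prox z' ∈ K) {ξ : ℝ} (hξ : 0 ≤ ξ) :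
    Hmer f φ f' prox lam ξ z' - Hmer f φ f' prox lam ξ z
      ≤ (1 - ξ) * ⟪Fnor f' prox lam z, prox z' - prox z⟫
        + ‖Fnor f' prox lam z' - Fnor f' prox lam z‖ * ‖prox z' - prox z‖
        + L / 2 * ‖prox z' - prox z‖ ^ 2
        + ξ * (lam * L) * (‖Fnor f' prox lam z‖ * ‖prox z' - prox z‖)
        + ξ * ⟪Fnor f' prox lam z, z' - z⟫
        + ξ * lam / 2 * ‖Fnor f' prox lam z' - Fnor f' prox lam z‖ ^ 2 := by
  set F := Fnor f' prox lam
  set v := prox z' - prox z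
  have hψ := psiR_prox_sub_le hP hf hK hLip hx hx'
  have hcross : ⟪F z' - F z, v⟫ ≤ ‖F z' - F z‖ * ‖v‖ := real_inner_le_norm _ _
  have hquad : ‖F z'‖ ^ 2 - ‖F z‖ ^ 2 = 2 * ⟪F z, F z' - F z⟫ + ‖F z' - F z‖ ^ 2 := by
    rw [show F z' = F z + (F z' - F z) by abel, norm_add_sq_real, add_sub_cancel_left]
    ring
  have hsplit : lam • (F z' - F z) = lam • (f' (prox z') - f' (prox z)) + (z' - z) - v := by
    simp only [F, v, Fnor, smul_add, smul_sub, smul_smul, mul_inv_cancel₀ hP.pos.ne', one_smul]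
    abel
  have hgrad : lam * ⟪F z, f' (prox z') - f' (prox z)⟫ ≤ lam * L * (‖F z‖ * ‖v‖) := by
    have h := (real_inner_le_norm (F z) _).trans
      (mul_le_mul_of_nonneg_left (hLip _ hx' _ hx) (norm_nonneg (F z)))
    calc _ ≤ lam * (‖F z‖ * (L * ‖v‖)) := mul_le_mul_of_nonneg_left h hP.pos.le
      _ = _ := by ring
  have hlam : lam * ⟪F z, F z' - F z⟫
      = lam * ⟪F z, f' (prox z') - f' (prox z)⟫ + ⟪F z, z' - z⟫ - ⟪F z, v⟫ := by
    rw [← real_inner_smul_right, hsplit, inner_sub_right, inner_add_right, real_inner_smul_right]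
  have hFv : ⟪F z', v⟫ = ⟪F z, v⟫ + ⟪F z' - F z, v⟫ := by
    rw [inner_sub_left]; ring
  have key : Hmer f φ f' prox lam ξ z' - Hmer f φ f' prox lam ξ z
      = (psiR f φ (prox z') - psiR f φ (prox z)) + ξ * lam / 2 * (‖F z'‖ ^ 2 - ‖F z‖ ^ 2) := by
    simp only [Hmer, F]; ring
  rw [key, hquad]
  nlinarith [mul_le_mul_of_nonneg_left hgrad hξ]

lemma mul_Hmer_sub_le {f : E → ℝ} {f' : E → E} {φ : E → EReal} {prox : E → E} {lam L : ℝ}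
    {K : Set E} (hP : IsProxMap φ prox lam) (hf : ∀ v, HasGradientAt f (f' v) v)
    (hK : Convex ℝ K) (hLip : ∀ u ∈ K, ∀ v ∈ K, ‖f' u - f' v‖ ≤ L * ‖u - v‖) {z z' : E}
    (hx : prox z ∈ K) (hx' : prox z' ∈ K) {ξ τ : ℝ} (hξ₀ : 0 ≤ ξ) (hξ : ξ ≤ 1 / 2)
    (hμ : 2 * ξ * (lam * L) ^ 2 = 1 - 2 * ξ) (hτ : 0 ≤ τ) (hLτ : 8 * L * τ ≤ 1) :
    τ * (Hmer f φ f' prox lam ξ z' - Hmer f φ f' prox lam ξ z)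
      ≤ -(ξ / 2) * (τ * ‖Fnor f' prox lam z‖) ^ 2 + ‖z' - z + τ • Fnor f' prox lam z‖ ^ 2
        + τ * (4 * τ + ξ * lam / 2) * ‖Fnor f' prox lam z' - Fnor f' prox lam z‖ ^ 2 := by
  have hM := Hmer_sub_le hP hf hK hLip hx hx' hξ₀
  have hfirm := hP.norm_sq_le_inner z' z
  set F := Fnor f' prox lam
  set v := prox z' - prox z
  set r := z' - z + τ • F z
  have hstep : z' - z = r - τ • F z := by simp only [r]; abel
  have hvF : τ * ⟪F z, v⟫ ≤ -‖v‖ ^ 2 + ‖v‖ * ‖r‖ := by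
    rw [hstep, inner_sub_left, real_inner_smul_left] at hfirm
    linarith [real_inner_le_norm r v]
  have hdir : ⟪F z, z' - z⟫ ≤ -τ * ‖F z‖ ^ 2 + ‖F z‖ * ‖r‖ := by
    rw [hstep, inner_sub_right, real_inner_smul_right, real_inner_self_eq_norm_sq]
    linarith [real_inner_le_norm (F z) r]
  have hY := young_window_bound (a := ‖F z‖) (V := ‖v‖) (ρ := ‖r‖) (D := ‖F z' - F z‖)
    hξ₀ hξ hμ hLτ
  have h₁ := mul_le_mul_of_nonneg_left hM hτ
  have h₂ := mul_le_mul_of_nonneg_left hvF (by linarith : (0 : ℝ) ≤ 1 - ξ)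
  have h₃ := mul_le_mul_of_nonneg_left hdir (mul_nonneg hτ hξ₀)
  linarith

theorem Hmer_sub_le_of_window {f : E → ℝ} {f' : E → E} {φ : E → EReal} {prox : E → E}
    {lam L : ℝ} {K : Set E} (hP : IsProxMap φ prox lam) (hf : ∀ v, HasGradientAt f (f' v) v)
    (hK : Convex ℝ K) (hLip : ∀ u ∈ K, ∀ v ∈ K, ‖f' u - f' v‖ ≤ L * ‖u - v‖) (hL : 0 ≤ L)
    {α : ℕ → ℝ} {z e : ℕ → E} (hα : ∀ i, 0 ≤ α i)
    (hz : ∀ i, z (i + 1) = z i - α i • (Fnor f' prox lam (z i) + e i))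
    (hxK : ∀ i, prox (z i) ∈ K) {ξ T S : ℝ} (hξ₀ : 0 ≤ ξ) (hξ : ξ ≤ 1 / 2)
    (hμ : 2 * ξ * (lam * L) ^ 2 = 1 - 2 * ξ) (hT : 0 < T)
    (hsmall : (L + 2 / lam) * T * (1 + lam * (L + 2 / lam)) ≤ ξ / 30) {M N : ℕ} (hMN : M ≤ N)
    (hτ₁ : 4 / 5 * T ≤ ∑ i ∈ Finset.Ico M N, α i) (hτ₂ : ∑ i ∈ Finset.Ico M N, α i ≤ T)
    (hE : ∀ j ∈ Finset.Icc M N, ‖∑ i ∈ Finset.Ico M j, α i • e i‖ ≤ S) :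
    Hmer f φ f' prox lam ξ (z N) - Hmer f φ f' prox lam ξ (z M)
      ≤ -(ξ * T / 5) * ‖Fnor f' prox lam (z M)‖ ^ 2 + 5 / T * S ^ 2 := by
  have hlam := hP.pos
  set LF := L + 2 / lam
  have hLF : 0 ≤ LF := by positivity
  have hθ : LF * T ≤ 1 / 60 := by
    nlinarith [mul_nonneg (mul_nonneg hLF hT.le) (mul_nonneg hlam.le hLF)]
  have hLFT : 2 * LF * T ≤ 1 := by linarith
  have hLτ : 8 * L * ∑ i ∈ Finset.Ico M N, α i ≤ 1 := by
    have : L ≤ LF := le_add_of_nonneg_right (by positivity)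
    nlinarith [mul_le_mul_of_nonneg_left hτ₂ hL, mul_le_mul_of_nonneg_right this hT.le]
  have hF : ∀ i ∈ Finset.Ico M N,
      ‖Fnor f' prox lam (z i) - Fnor f' prox lam (z M)‖ ≤ LF * ‖z i - z M‖ :=
    fun i _ => norm_Fnor_sub_le hP hL hLip (hxK M) (hxK i)
  have hD : ‖Fnor f' prox lam (z N) - Fnor f' prox lam (z M)‖
      ≤ 2 * LF * (T * ‖Fnor f' prox lam (z M)‖ + S) := by
    have h := norm_sub_le_of_mem_window hz hα hτ₂ hLF hLFT hF hE N (Finset.right_mem_Icc.mpr hMN)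
    calc _ ≤ LF * ‖z N - z M‖ := norm_Fnor_sub_le hP hL hLip (hxK M) (hxK N)
      _ ≤ LF * (2 * (T * ‖Fnor f' prox lam (z M)‖ + S)) := mul_le_mul_of_nonneg_left h hLF
      _ = _ := by ring
  exact window_bound_of_young hT hτ₁ hτ₂ hξ₀ hξ hlam.le hLF hsmall (norm_nonneg _)
    (norm_sub_add_sum_smul_le hz hα hMN hτ₂ hLF hLFT hF hE) (norm_nonneg _) hD
    (mul_Hmer_sub_le hP hf hK hLip (hxK M) (hxK N) hξ₀ hξ hμ
      (Finset.sum_nonneg fun i _ => hα i) hLτ)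

theorem stmt6_general
    (f : E → ℝ) (f' : E → E) (φ : E → EReal) (prox : E → E) (lam : ℝ)
    (hlam : 0 < lam)
    (hf : ∀ v : E, HasGradientAt f (f' v) v)
    (hφconv : ∀ u v : E, ∀ a b : ℝ, 0 ≤ a → 0 ≤ b → a + b = 1 →
      φ (a • u + b • v) ≤ (a : EReal) * φ u + (b : EReal) * φ v)
    (hφnebot : ∀ v : E, φ v ≠ ⊥) (hφnetop : ∃ v : E, φ v ≠ ⊤)
    (hprox : ∀ u v : E,
      φ (prox u) + ((‖u - prox u‖ ^ 2 / (2 * lam) : ℝ) : EReal)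
        ≤ φ v + ((‖u - v‖ ^ 2 / (2 * lam) : ℝ) : EReal))
    (α : ℕ → ℝ) (hα : ∀ k, 0 < α k)
    (z x gseq e : ℕ → E)
    (hx : ∀ k, x k = prox (z k))
    (hzrec : ∀ k, z (k + 1) = z k - α k • (gseq k + lam⁻¹ • (z k - x k)))
    (he : ∀ k, e k = gseq k - f' (x k))
    (L : ℝ) (hL : 0 ≤ L)
    (hLip : ∀ u ∈ closure (convexHull ℝ (Set.range x)),
      ∀ v ∈ closure (convexHull ℝ (Set.range x)), ‖f' u - f' v‖ ≤ L * ‖u - v‖)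
    (ξ : ℝ) (hξ : ξ = 1 / (2 + 2 * lam ^ 2 * L ^ 2)) :
    ∃ Tb > (0 : ℝ), ∀ T : ℝ, 0 < T → T ≤ Tb → ∀ K₀ : ℕ, ∀ m : ℕ → ℕ, ∀ hm : StrictMono m,
      (∀ k ≥ K₀, 4 / 5 * T ≤ ∑ i ∈ Finset.Ico (m k) (m (k + 1)), α i ∧
        ∑ i ∈ Finset.Ico (m k) (m (k + 1)), α i ≤ T) →
      ∀ k ≥ K₀,
        Hmer f φ f' prox lam ξ (z (m (k + 1))) - Hmer f φ f' prox lam ξ (z (m k)) ≤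
          -(ξ * T / 5) * ‖Fnor f' prox lam (z (m k))‖ ^ 2 +
            (5 / T) *
              ((Finset.Icc (m k + 1) (m (k + 1))).sup'
                  (Finset.nonempty_Icc.mpr (hm (Nat.lt_succ_self k)))
                  (fun j => ‖∑ i ∈ Finset.Ico (m k) j, α i • e i‖)) ^ 2 := by
  have hP : IsProxMap φ prox lam := ⟨hlam, hφconv, hφnebot, hφnetop, hprox⟩
  have hden : 0 < 2 + 2 * lam ^ 2 * L ^ 2 := by positivity
  have hξ₀ : 0 < ξ := hξ ▸ by positivity
  have hξ₁ : ξ ≤ 1 / 2 := by rw [hξ]; gcongr; nlinarith [sq_nonneg (lam * L)]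
  have hμ : 2 * ξ * (lam * L) ^ 2 = 1 - 2 * ξ := by rw [hξ]; field_simp; ring
  have hz : ∀ i, z (i + 1) = z i - α i • (Fnor f' prox lam (z i) + e i) := by
    intro i
    rw [hzrec, Fnor, he, hx]
    congr 2
    abel
  refine ⟨ξ / (30 * (L + 2 / lam) * (1 + lam * (L + 2 / lam))), by positivity, ?_⟩
  intro T hT hTb K₀ m hm hwin k hk
  have hsmall : (L + 2 / lam) * T * (1 + lam * (L + 2 / lam)) ≤ ξ / 30 := by
    rw [le_div_iff₀ (by positivity)] at hTb
    linarith
  have hMN := hm (Nat.lt_succ_self k)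
  refine Hmer_sub_le_of_window hP hf (convex_convexHull ℝ _).closure hLip hL (fun i => (hα i).le)
    hz (fun i => hx i ▸ subset_closure (subset_convexHull ℝ _ ⟨i, rfl⟩)) hξ₀.le hξ₁ hμ hT hsmall
    hMN.le (hwin k hk).1 (hwin k hk).2 fun j hj => ?_
  rcases (Finset.mem_Icc.mp hj).1.eq_or_lt with rfl | hlt
  · rw [Finset.Ico_self, Finset.sum_empty, norm_zero]
    exact (norm_nonneg _).trans (Finset.le_sup' (fun j => ‖∑ i ∈ Finset.Ico (m k) j, α i • e i‖)
      (Finset.mem_Icc.mpr ⟨le_rfl, hMN⟩))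
  · exact Finset.le_sup' (fun j => ‖∑ i ∈ Finset.Ico (m k) j, α i • e i‖)
      (Finset.mem_Icc.mpr ⟨hlt, (Finset.mem_Icc.mp hj).2⟩)

/-- Approximate descent property for the merit function over time windows. -/
theorem stmt6
    (f : E → ℝ) (f' : E → E) (φ : E → EReal) (prox : E → E) (lam : ℝ)
    (hlam : 0 < lam)
    (hf : ∀ v : E, HasGradientAt f (f' v) v) (hf'cont : Continuous f')
    (hφconv : ∀ u v : E, ∀ a b : ℝ, 0 ≤ a → 0 ≤ b → a + b = 1 →
      φ (a • u + b • v) ≤ (a : EReal) * φ u + (b : EReal) * φ v)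
    (hφlsc : LowerSemicontinuous φ)
    (hφnebot : ∀ v : E, φ v ≠ ⊥) (hφnetop : ∃ v : E, φ v ≠ ⊤)
    (hprox : ∀ u v : E,
      φ (prox u) + ((‖u - prox u‖ ^ 2 / (2 * lam) : ℝ) : EReal)
        ≤ φ v + ((‖u - v‖ ^ 2 / (2 * lam) : ℝ) : EReal))
    (α : ℕ → ℝ) (hα : ∀ k, 0 < α k)
    (z x gseq e : ℕ → E)
    (hx : ∀ k, x k = prox (z k))
    (hzrec : ∀ k, z (k + 1) = z k - α k • (gseq k + lam⁻¹ • (z k - x k)))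
    (he : ∀ k, e k = gseq k - f' (x k))
    (L : ℝ) (hL : 0 ≤ L)
    (hLip : ∀ u ∈ closure (convexHull ℝ (Set.range x)),
      ∀ v ∈ closure (convexHull ℝ (Set.range x)), ‖f' u - f' v‖ ≤ L * ‖u - v‖)
    (ξ : ℝ) (hξ : ξ = 1 / (2 + 2 * lam ^ 2 * L ^ 2)) :
    ∃ Tb > (0 : ℝ), ∀ T : ℝ, 0 < T → T ≤ Tb → ∀ K₀ : ℕ, ∀ m : ℕ → ℕ, ∀ hm : StrictMono m,
      (∀ k ≥ K₀, 4 / 5 * T ≤ ∑ i ∈ Finset.Ico (m k) (m (k + 1)), α i ∧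
        ∑ i ∈ Finset.Ico (m k) (m (k + 1)), α i ≤ T) →
      ∀ k ≥ K₀,
        Hmer f φ f' prox lam ξ (z (m (k + 1))) - Hmer f φ f' prox lam ξ (z (m k)) ≤
          -(ξ * T / 5) * ‖Fnor f' prox lam (z (m k))‖ ^ 2 +
            (5 / T) *
              ((Finset.Icc (m k + 1) (m (k + 1))).sup'
                  (Finset.nonempty_Icc.mpr (hm (Nat.lt_succ_self k)))
                  (fun j => ‖∑ i ∈ Finset.Ico (m k) j, α i • e i‖)) ^ 2 :=
  stmt6_general f f' φ prox lam hlam hf hφconv hφnebot hφnetop hprox α hα z x gseq e hx hzrec he L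
    hL hLip ξ hξ
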